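/- arXiv:1612.07484 — 3 statements merged into one kernel-verified Lean document; each statement's English description precedes it below -/
import Mathlib

section
/- Let X be a smooth vector field on a manifold M admitting a smooth proper function g : M → ℝ. Define f = exp(−(Xg)²) and Γ = fX. Then every integral curve of Γ defined on a bounded interval has relatively compact image; consequently Γ is a complete vector field. -/
open Set Metric

namespace Stmt7Aux

/-- Scalar inequality: `|exp (-s²) * s| ≤ 1`. -/
lemma key_ineq (s : ℝ) : |Real.exp (-s ^ 2) * s| ≤ 1 := by
  rw [abs_mul, Real.abs_exp]
  have h1 : |s| ≤ Real.exp (s ^ 2) := by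
    have h2 : s ^ 2 + 1 ≤ Real.exp (s ^ 2) := Real.add_one_le_exp _
    nlinarith [sq_nonneg (|s| - 1), sq_abs s, abs_nonneg s]
  have h3 : Real.exp (-s ^ 2) * |s| ≤ Real.exp (-s ^ 2) * Real.exp (s ^ 2) :=
    mul_le_mul_of_nonneg_left h1 (Real.exp_pos _).le
  rw [← Real.exp_add, neg_add_cancel, Real.exp_zero] at h3
  exact h3

variable {n : ℕ} {X : (Fin n → ℝ) → (Fin n → ℝ)} {g : (Fin n → ℝ) → ℝ}

/-- The conformally rescaled vector field. -/
noncomputable def Gam (X : (Fin n → ℝ) → (Fin n → ℝ)) (g : (Fin n → ℝ) → ℝ)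
    (x : Fin n → ℝ) : Fin n → ℝ :=
  Real.exp (-(fderiv ℝ g x (X x)) ^ 2) • X x

lemma gam_smooth (hX : ContDiff ℝ (⊤ : ℕ∞) X) (hg : ContDiff ℝ (⊤ : ℕ∞) g) :
    ContDiff ℝ 1 (Gam X g) := by
  have hdg : ContDiff ℝ (⊤ : ℕ∞) (fun x => fderiv ℝ g x (X x)) :=
    ContDiff.clm_apply (hg.fderiv_right (by simp)) hX
  have hc : ContDiff ℝ (⊤ : ℕ∞) (fun x => Real.exp (-(fderiv ℝ g x (X x)) ^ 2)) :=
    Real.contDiff_exp.comp ((hdg.pow 2).neg)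
  exact (hc.smul hX).of_le (by simp)

/-- The drift bound: along any curve whose derivative is `(c t * exp(-(Xg)²)) • X`,
with `|c| ≤ 1`, the function `g` moves at speed at most `1`. -/
lemma drift (hg : ContDiff ℝ (⊤ : ℕ∞) g) {γ : ℝ → Fin n → ℝ} {c : ℝ → ℝ} {a b : ℝ}
    (hderiv : ∀ t ∈ Ioo a b,
      HasDerivAt γ ((c t * Real.exp (-(fderiv ℝ g (γ t) (X (γ t))) ^ 2)) • X (γ t)) t)
    (hc : ∀ t ∈ Ioo a b, |c t| ≤ 1) {t₀ t : ℝ} (ht₀ : t₀ ∈ Ioo a b) (ht : t ∈ Ioo a b) :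
    |g (γ t) - g (γ t₀)| ≤ |t - t₀| := by
  have hder : ∀ s ∈ Ioo a b, HasDerivWithinAt (fun u => g (γ u))
      ((c s * Real.exp (-(fderiv ℝ g (γ s) (X (γ s))) ^ 2)) * fderiv ℝ g (γ s) (X (γ s)))
      (Ioo a b) s := by
    intro s hs
    have h1 : HasDerivAt (fun u => g (γ u)) (fderiv ℝ g (γ s)
        ((c s * Real.exp (-(fderiv ℝ g (γ s) (X (γ s))) ^ 2)) • X (γ s))) s :=
      ((hg.differentiable (by simp) (γ s)).hasFDerivAt).comp_hasDerivAt s (hderiv s hs)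
    rw [map_smul, smul_eq_mul] at h1
    exact h1.hasDerivWithinAt
  have hbound : ∀ s ∈ Ioo a b,
      ‖(c s * Real.exp (-(fderiv ℝ g (γ s) (X (γ s))) ^ 2)) * fderiv ℝ g (γ s) (X (γ s))‖ ≤ 1 := by
    intro s hs
    rw [Real.norm_eq_abs, mul_assoc, abs_mul]
    calc |c s| * |Real.exp (-(fderiv ℝ g (γ s) (X (γ s))) ^ 2) * fderiv ℝ g (γ s) (X (γ s))|
        ≤ 1 * 1 := mul_le_mul (hc s hs) (key_ineq _) (abs_nonneg _) zero_le_one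
      _ = 1 := one_mul 1
  have := (convex_Ioo a b).norm_image_sub_le_of_norm_hasDerivWithin_le
    (f' := fun s => (c s * Real.exp (-(fderiv ℝ g (γ s) (X (γ s))) ^ 2)) *
      fderiv ℝ g (γ s) (X (γ s))) hder hbound ht₀ ht
  simpa [Real.norm_eq_abs] using this

/-- Existence of a solution of `x' = Γ(x)` on `Ioo (-T) T`. -/
lemma exists_sol (hX : ContDiff ℝ (⊤ : ℕ∞) X) (hg : ContDiff ℝ (⊤ : ℕ∞) g)
    (hproper : ∀ K : Set ℝ, IsCompact K → IsCompact (g ⁻¹' K))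
    (x₀ : Fin n → ℝ) (T : ℝ) (hT : 0 < T) :
    ∃ γ : ℝ → Fin n → ℝ, γ 0 = x₀ ∧
      ∀ t ∈ Ioo (-T) T, HasDerivAt γ (Gam X g (γ t)) t := by
  -- Compact region in which the curve must stay
  have hKcomp : IsCompact (g ⁻¹' Icc (g x₀ - T) (g x₀ + T)) := hproper _ isCompact_Icc
  obtain ⟨r, hr⟩ := hKcomp.isBounded.subset_closedBall x₀
  -- Bump function equal to 1 on `closedBall x₀ (max r 1)`
  have hrin : (0 : ℝ) < max r 1 := lt_of_lt_of_le one_pos (le_max_right r 1)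
  set φb : ContDiffBump x₀ := ⟨max r 1, max r 1 + 1, hrin, lt_add_one _⟩ with hφb
  set Γ' : (Fin n → ℝ) → Fin n → ℝ := fun x => φb x • Gam X g x with hΓ'
  have hΓ'smooth : ContDiff ℝ 1 Γ' :=
    (φb.contDiff (n := 1)).smul (gam_smooth hX hg)
  have hsupp : HasCompactSupport Γ' := φb.hasCompactSupport.smul_right
  obtain ⟨L, hL⟩ := hΓ'smooth.lipschitzWith_of_hasCompactSupport hsupp one_ne_zero
  obtain ⟨C, hC⟩ := hsupp.exists_bound_of_continuous hΓ'smooth.continuous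
  have hC0 : 0 ≤ C := le_trans (norm_nonneg (Γ' x₀)) (hC x₀)
  -- Picard–Lindelöf on `Icc (-T) T`
  have hpl : IsPicardLindelof (fun _ x => Γ' x) (tmin := -T) (tmax := T)
      ⟨0, ⟨neg_nonpos.mpr hT.le, hT.le⟩⟩ x₀ (C.toNNReal * T.toNNReal) 0 C.toNNReal L :=
    { lipschitzOnWith := fun _ _ => hL.lipschitzOnWith
      continuousOn := fun _ _ => continuousOn_const
      norm_le := fun _ _ x _ => (hC x).trans (Real.le_coe_toNNReal C)
      mul_max_le := by
        have h : max T (0 - -T) = T := by simp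
        simp only [NNReal.coe_mul, NNReal.coe_zero, sub_zero, Real.coe_toNNReal _ hT.le]
        rw [h] }
  obtain ⟨γ, hγ0, hγ⟩ := hpl.exists_eq_forall_mem_Icc_hasDerivWithinAt₀
  replace hγ0 : γ 0 = x₀ := hγ0
  have hderiv : ∀ t ∈ Ioo (-T) T, HasDerivAt γ (Γ' (γ t)) t := fun t ht =>
    (hγ t (Ioo_subset_Icc_self ht)).hasDerivAt (Icc_mem_nhds ht.1 ht.2)
  -- Rewrite the derivative of the modified field in the `drift` shape
  have hderiv' : ∀ t ∈ Ioo (-T) T, HasDerivAt γ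
      ((φb (γ t) * Real.exp (-(fderiv ℝ g (γ t) (X (γ t))) ^ 2)) • X (γ t)) t := by
    intro t ht
    have h : HasDerivAt γ (φb (γ t) • Gam X g (γ t)) t := hderiv t ht
    simp only [Gam, smul_smul] at h
    exact h
  have h0 : (0 : ℝ) ∈ Ioo (-T) T := ⟨neg_lt_zero.mpr hT, hT⟩
  have hc : ∀ t ∈ Ioo (-T) T, |φb (γ t)| ≤ 1 := fun t _ => by
    rw [abs_of_nonneg φb.nonneg]; exact φb.le_one
  -- The curve stays in the region where the bump is 1
  have hstay : ∀ t ∈ Ioo (-T) T, φb (γ t) = 1 := by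
    intro t ht
    have hd := drift hg hderiv' hc h0 ht
    rw [hγ0, sub_zero] at hd
    have habs : |t| ≤ T := le_of_lt (abs_lt.mpr ⟨ht.1, ht.2⟩)
    have hmem : γ t ∈ g ⁻¹' Icc (g x₀ - T) (g x₀ + T) := by
      have h1 := abs_le.mp (le_trans hd habs)
      exact ⟨by linarith [h1.1], by linarith [h1.2]⟩
    have hball : γ t ∈ closedBall x₀ (max r 1) :=
      closedBall_subset_closedBall (le_max_left r 1) (hr hmem)
    exact φb.one_of_mem_closedBall hball
  refine ⟨γ, hγ0, fun t ht => ?_⟩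
  have h : HasDerivAt γ (φb (γ t) • Gam X g (γ t)) t := hderiv t ht
  rw [hstay t ht, one_smul] at h
  exact h

/-- Any solution confines to the compact region cut out by `g`. -/
lemma sol_mem (hg : ContDiff ℝ (⊤ : ℕ∞) g)
    {x₀ : Fin n → ℝ} {T : ℝ} (hT : 0 < T) {γ : ℝ → Fin n → ℝ}
    (h0 : γ 0 = x₀)
    (h : ∀ t ∈ Ioo (-T) T, HasDerivAt γ (Gam X g (γ t)) t)
    {t : ℝ} (ht : t ∈ Ioo (-T) T) :
    γ t ∈ g ⁻¹' Icc (g x₀ - T) (g x₀ + T) := by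
  have hmem0 : (0 : ℝ) ∈ Ioo (-T) T := ⟨neg_lt_zero.mpr hT, hT⟩
  have hderiv' : ∀ s ∈ Ioo (-T) T, HasDerivAt γ
      (((1 : ℝ) * Real.exp (-(fderiv ℝ g (γ s) (X (γ s))) ^ 2)) • X (γ s)) s := by
    intro s hs
    simpa [Gam, one_mul] using h s hs
  have hd := drift hg hderiv' (fun _ _ => by norm_num) hmem0 ht
  rw [h0, sub_zero] at hd
  have habs : |t| ≤ T := le_of_lt (abs_lt.mpr ⟨ht.1, ht.2⟩)
  have h1 := abs_le.mp (le_trans hd habs)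
  exact ⟨by linarith [h1.1], by linarith [h1.2]⟩

/-- Uniqueness of solutions of `x' = Γ(x)` on `Ioo (-T) T` with the same initial value. -/
lemma sol_unique (hX : ContDiff ℝ (⊤ : ℕ∞) X) (hg : ContDiff ℝ (⊤ : ℕ∞) g)
    (hproper : ∀ K : Set ℝ, IsCompact K → IsCompact (g ⁻¹' K))
    {x₀ : Fin n → ℝ} {T : ℝ} (hT : 0 < T) {γ₁ γ₂ : ℝ → Fin n → ℝ}
    (h₁0 : γ₁ 0 = x₀) (h₂0 : γ₂ 0 = x₀)
    (h₁ : ∀ t ∈ Ioo (-T) T, HasDerivAt γ₁ (Gam X g (γ₁ t)) t)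
    (h₂ : ∀ t ∈ Ioo (-T) T, HasDerivAt γ₂ (Gam X g (γ₂ t)) t) :
    EqOn γ₁ γ₂ (Ioo (-T) T) := by
  have hmem0 : (0 : ℝ) ∈ Ioo (-T) T := ⟨neg_lt_zero.mpr hT, hT⟩
  have hKcomp : IsCompact (g ⁻¹' Icc (g x₀ - T) (g x₀ + T)) := hproper _ isCompact_Icc
  obtain ⟨r, hr⟩ := hKcomp.isBounded.subset_closedBall x₀
  have hΓ := gam_smooth hX hg
  obtain ⟨C, hC⟩ := (isCompact_closedBall x₀ r).exists_bound_of_continuousOn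
    ((hΓ.continuous_fderiv one_ne_zero).continuousOn)
  have hlip : LipschitzOnWith C.toNNReal (Gam X g) (closedBall x₀ r) := by
    refine Convex.lipschitzOnWith_of_nnnorm_fderiv_le
      (fun x _ => hΓ.differentiable one_ne_zero x) (fun x hx => ?_) (convex_closedBall _ _)
    rw [← NNReal.coe_le_coe, coe_nnnorm, Real.coe_toNNReal']
    exact le_trans (hC x hx) (le_max_left _ _)
  exact ODE_solution_unique_of_mem_Ioo (v := fun _ x => Gam X g x)
    (s := fun _ => closedBall x₀ r) (fun _ _ => hlip) hmem0
    (fun t ht => ⟨h₁ t ht, hr (sol_mem hg hT h₁0 h₁ ht)⟩)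
    (fun t ht => ⟨h₂ t ht, hr (sol_mem hg hT h₂0 h₂ ht)⟩)
    (h₁0.trans h₂0.symm)

end Stmt7Aux

open Stmt7Aux in
/-- For `X` smooth and `g` a smooth proper function, the conformal factor
`f = exp(−(Xg)²)` makes `Γ = f X` a vector field whose integral curves on bounded
intervals have relatively compact image; consequently `Γ` is complete. -/
theorem stmt_7 {n : ℕ} (X : (Fin n → ℝ) → (Fin n → ℝ)) (hX : ContDiff ℝ (⊤ : ℕ∞) X)
    (g : (Fin n → ℝ) → ℝ) (hg : ContDiff ℝ (⊤ : ℕ∞) g)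
    (hproper : ∀ K : Set ℝ, IsCompact K → IsCompact (g ⁻¹' K)) :
    (∀ a b : ℝ, ∀ γ : ℝ → (Fin n → ℝ),
      (∀ t ∈ Set.Ioo a b,
        HasDerivAt γ (Real.exp (-(fderiv ℝ g (γ t) (X (γ t))) ^ 2) • X (γ t)) t) →
      IsCompact (closure (γ '' Set.Ioo a b))) ∧
    (∀ x₀ : Fin n → ℝ, ∃ γ : ℝ → (Fin n → ℝ), γ 0 = x₀ ∧
      ∀ t : ℝ, HasDerivAt γ (Real.exp (-(fderiv ℝ g (γ t) (X (γ t))) ^ 2) • X (γ t)) t) := by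
  constructor
  · -- Part 1: relatively compact image on bounded intervals
    intro a b γ hγ
    by_cases hab : a < b
    · set t₀ : ℝ := (a + b) / 2 with ht₀def
      have ht₀ : t₀ ∈ Set.Ioo a b := ⟨by rw [ht₀def]; linarith, by rw [ht₀def]; linarith⟩
      have hderiv' : ∀ t ∈ Set.Ioo a b, HasDerivAt γ
          (((1 : ℝ) * Real.exp (-(fderiv ℝ g (γ t) (X (γ t))) ^ 2)) • X (γ t)) t := by
        intro t ht
        simpa [one_mul] using hγ t ht
      have hKcomp : IsCompact (g ⁻¹' Set.Icc (g (γ t₀) - (b - a)) (g (γ t₀) + (b - a))) :=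
        hproper _ isCompact_Icc
      have hsub : γ '' Set.Ioo a b ⊆
          g ⁻¹' Set.Icc (g (γ t₀) - (b - a)) (g (γ t₀) + (b - a)) := by
        rintro _ ⟨t, ht, rfl⟩
        have hd := drift hg hderiv' (fun _ _ => by norm_num) ht₀ ht
        have hsmall : |t - t₀| ≤ b - a := by
          rw [abs_le]
          constructor <;> [linarith [ht.1, ht₀.2]; linarith [ht.2, ht₀.1]]
        have h1 := abs_le.mp (le_trans hd hsmall)
        exact ⟨by linarith [h1.1], by linarith [h1.2]⟩
      exact hKcomp.of_isClosed_subset isClosed_closure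
        (closure_minimal hsub hKcomp.isClosed)
    · rw [Set.Ioo_eq_empty hab, Set.image_empty, closure_empty]
      exact isCompact_empty
  · -- Part 2: completeness
    intro x₀
    choose γs h0s hds using fun k : ℕ =>
      exists_sol hX hg hproper x₀ ((k : ℝ) + 1) (by positivity)
    -- any two chosen solutions agree on the common interval
    have hagree : ∀ (j k : ℕ) (s : ℝ), |s| < (j : ℝ) + 1 → |s| < (k : ℝ) + 1 →
        γs j s = γs k s := by
      intro j k s hj hk
      set m : ℕ := min j k with hm
      have hmj : (m : ℝ) ≤ (j : ℝ) := Nat.cast_le.mpr (min_le_left j k)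
      have hmk : (m : ℝ) ≤ (k : ℝ) := Nat.cast_le.mpr (min_le_right j k)
      have hsubj : Set.Ioo (-((m : ℝ) + 1)) ((m : ℝ) + 1) ⊆
          Set.Ioo (-((j : ℝ) + 1)) ((j : ℝ) + 1) :=
        Set.Ioo_subset_Ioo (by linarith) (by linarith)
      have hsubk : Set.Ioo (-((m : ℝ) + 1)) ((m : ℝ) + 1) ⊆
          Set.Ioo (-((k : ℝ) + 1)) ((k : ℝ) + 1) :=
        Set.Ioo_subset_Ioo (by linarith) (by linarith)
      have hsm : s ∈ Set.Ioo (-((m : ℝ) + 1)) ((m : ℝ) + 1) := by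
        have : |s| < (m : ℝ) + 1 := by
          rcases min_choice j k with h | h <;> rw [hm, h]
          · exact hj
          · exact hk
        exact abs_lt.mp this |> fun h' => ⟨h'.1, h'.2⟩
      exact sol_unique hX hg hproper (T := (m : ℝ) + 1) (by positivity)
        (h0s j) (h0s k)
        (fun t ht => hds j t (hsubj ht))
        (fun t ht => hds k t (hsubk ht)) hsm
    refine ⟨fun t => γs ⌈|t|⌉₊ t, by simpa using h0s 0, fun t => ?_⟩
    set m : ℕ := ⌈|t|⌉₊ with hmdef
    have h1 : |t| < (m : ℝ) + 1 := lt_of_le_of_lt (Nat.le_ceil _) (lt_add_one _)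
    have htmem : t ∈ Set.Ioo (-((m : ℝ) + 1)) ((m : ℝ) + 1) := by
      have h' := abs_lt.mp h1; exact ⟨h'.1, h'.2⟩
    have hev : (fun s => γs ⌈|s|⌉₊ s) =ᶠ[nhds t] γs m := by
      refine Filter.eventually_of_mem (isOpen_Ioo.mem_nhds htmem) (fun s hs => ?_)
      have hsabs : |s| < (m : ℝ) + 1 := abs_lt.mpr ⟨hs.1, hs.2⟩
      exact hagree ⌈|s|⌉₊ m s (lt_of_le_of_lt (Nat.le_ceil _) (lt_add_one _)) hsabs
    have hAt : HasDerivAt (γs m) (Gam X g (γs m t)) t := hds m t htmem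
    have hAt' : HasDerivAt (fun s => γs ⌈|s|⌉₊ s) (Gam X g (γs m t)) t :=
      hAt.congr_of_eventuallyEq hev
    have hteq : γs ⌈|t|⌉₊ t = γs m t := by rw [← hmdef]
    show HasDerivAt (fun s => γs ⌈|s|⌉₊ s) (Gam X g (γs ⌈|t|⌉₊ t)) t
    rw [hteq]
    exact hAt'
end

section
/- Let Γ = Σ_k (v^k ∂/∂q^k + F^k ∂/∂v^k) be a SODE on ℝ^{2n} and f ∈ C^∞(ℝ^{2n}) nowhere vanishing. Define new coordinates Q^k = q^k, 𝒱^k = f v^k. Then Γ' = fΓ satisfies L_{Γ'} Q^k = 𝒱^k, i.e., Γ' is a SODE in the coordinates (Q, 𝒱), and in these coordinates Γ' = 𝒱^k ∂/∂Q^k + F̃^k ∂/∂𝒱^k with F̃^k = L_{Γ'}(f v^k) = f v^k v^j ∂f/∂q^j + f v^k F^j ∂f/∂v^j + f² F^k. -/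
/-- Phase space `ℝ²ⁿ ≅ ℝⁿ × ℝⁿ` with coordinates `(q, v)`. -/
abbrev TRn (n : ℕ) := (Fin n → ℝ) × (Fin n → ℝ)

theorem fderiv_smul_snd_apply {𝕜 E G : Type*} [NontriviallyNormedField 𝕜]
    [NormedAddCommGroup E] [NormedSpace 𝕜 E] [NormedAddCommGroup G] [NormedSpace 𝕜 G]
    {f : E × G → 𝕜} {x : E × G} (hf : DifferentiableAt 𝕜 f x) (w : E × G) :
    fderiv 𝕜 (fun y => f y • y.2) x w = fderiv 𝕜 f x w • x.2 + f x • w.2 := by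
  rw [fderiv_fun_smul hf differentiableAt_snd]
  simp only [add_apply, smul_apply, ContinuousLinearMap.smulRight_apply, fderiv_snd,
    ContinuousLinearMap.coe_snd']
  exact add_comm _ _

theorem stmt_11_general {n : ℕ} (F : TRn n → (Fin n → ℝ)) (f : TRn n → ℝ)
    (hf : Differentiable ℝ f) :
    (∀ x : TRn n, fderiv ℝ (fun y : TRn n => y.1) x (f x • ((x.2, F x) : TRn n))
        = f x • x.2) ∧
    (∀ x : TRn n, fderiv ℝ (fun y : TRn n => f y • y.2) x (f x • ((x.2, F x) : TRn n))
        = fderiv ℝ f x (f x • ((x.2, F x) : TRn n)) • x.2 + (f x) ^ 2 • F x) := by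
  refine ⟨fun x => ?_, fun x => ?_⟩
  · rw [fderiv_fst]
    rfl
  · rw [fderiv_smul_snd_apply (hf x), Prod.smul_snd, smul_smul, sq]

/-- Let `Γ = vᵏ ∂/∂qᵏ + Fᵏ ∂/∂vᵏ` be a SODE and `f` nowhere vanishing. In the new
coordinates `Qᵏ = qᵏ`, `𝒱ᵏ = f vᵏ`, the field `Γ' = fΓ` satisfies `L_{Γ'} Qᵏ = 𝒱ᵏ`
(so `Γ'` is a SODE there), with forces `F̃ = L_{Γ'}(f v) = Γ'(f) v + f² F`. -/
theorem stmt_11 {n : ℕ} (F : TRn n → (Fin n → ℝ)) (f : TRn n → ℝ)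
    (hf0 : ∀ x, f x ≠ 0) (hf : Differentiable ℝ f) (hF : Differentiable ℝ F) :
    (∀ x : TRn n, fderiv ℝ (fun y : TRn n => y.1) x (f x • ((x.2, F x) : TRn n))
        = f x • x.2) ∧
    (∀ x : TRn n, fderiv ℝ (fun y : TRn n => f y • y.2) x (f x • ((x.2, F x) : TRn n))
        = fderiv ℝ f x (f x • ((x.2, F x) : TRn n)) • x.2 + (f x) ^ 2 • F x) :=
  stmt_11_general F f hf
end

section
/- For the regularized Kepler vector field Γ' on T(ℝ⁴∖{0}) written in the coordinates Q^k = y^k, 𝒱^k = 2R² v^k (where R² = Σ(y^k)²), the energy function E = 𝒱²/(2R²) − g/R² (with 𝒱² = Σ(𝒱^k)²) is a constant of motion, and on each level set Σ(E) with E < 0 the vector field restricts to 𝒱^k ∂/∂Q^k − 2|E| Q^k ∂/∂𝒱^k, a harmonic oscillator of frequency √(2|E|). -/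
/-! Write `E = (𝒱² − 2g)/(2R²)`. Along `Q' = 𝒱`, `𝒱' = 2E Q` one has `(𝒱² − 2g)' = 4E (Q·𝒱)` and
`(2R²)' = 4 (Q·𝒱)`, so numerator and denominator both have logarithmic derivative `2(Q·𝒱)/R²`
(using `𝒱² − 2g = 2E R²`), and the quotient rule gives `E' = 0`. On a level set `E = E₀ < 0`
the equation `𝒱' = 2E Q` is `𝒱' = −2|E₀| Q`. -/

/-- The energy `E(Q,𝒱) = 𝒱²/(2R²) − g/R²` of the regularized Kepler field. -/
noncomputable def keplerEnergy (g : ℝ) (q v : Fin 4 → ℝ) : ℝ :=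
  (∑ k, v k ^ 2) / (2 * ∑ k, q k ^ 2) - g / (∑ k, q k ^ 2)

theorem hasDerivAt_sum_sq {ι : Type*} [Fintype ι] {x : ℝ → ι → ℝ} {x' : ι → ℝ} {t : ℝ}
    (h : HasDerivAt x x' t) :
    HasDerivAt (fun t => ∑ k, x t k ^ 2) (2 * ∑ k, x t k * x' k) t := by
  rw [Finset.mul_sum]
  refine HasDerivAt.fun_sum fun k _ => ?_
  exact ((hasDerivAt_pi.mp h k).fun_pow 2).congr_deriv (by ring)

theorem keplerEnergy_eq_div (g : ℝ) (q v : Fin 4 → ℝ) :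
    keplerEnergy g q v = (∑ k, v k ^ 2 - 2 * g) / (2 * ∑ k, q k ^ 2) := by
  unfold keplerEnergy
  ring

theorem hasDerivAt_keplerEnergy_eq_zero {g : ℝ} {Q V : ℝ → Fin 4 → ℝ} {t : ℝ}
    (hQ0 : ∑ k, Q t k ^ 2 ≠ 0) (hQ : HasDerivAt Q (V t) t)
    (hV : HasDerivAt V ((2 * keplerEnergy g (Q t) (V t)) • Q t) t) :
    HasDerivAt (fun t => keplerEnergy g (Q t) (V t)) 0 t := by
  set E := keplerEnergy g (Q t) (V t) with hE
  set qv := ∑ k, Q t k * V t k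
  have hV2 : HasDerivAt (fun t => ∑ k, V t k ^ 2 - 2 * g) (4 * E * qv) t := by
    refine ((hasDerivAt_sum_sq hV).sub_const (2 * g)).congr_deriv ?_
    simp only [qv, Pi.smul_apply, smul_eq_mul, Finset.mul_sum]
    exact Finset.sum_congr rfl fun k _ => by ring
  have hR2 : HasDerivAt (fun t => 2 * ∑ k, Q t k ^ 2) (4 * qv) t :=
    ((hasDerivAt_sum_sq hQ).const_mul 2).congr_deriv (by ring)
  have hnum : ∑ k, V t k ^ 2 - 2 * g = E * (2 * ∑ k, Q t k ^ 2) := by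
    rw [hE, keplerEnergy_eq_div]
    field_simp
  simp_rw [keplerEnergy_eq_div]
  refine (hV2.div hR2 (mul_ne_zero two_ne_zero hQ0)).congr_deriv ?_
  rw [hnum]
  ring

theorem keplerEnergy_const {g : ℝ} {Q V : ℝ → Fin 4 → ℝ}
    (hQ0 : ∀ t, ∑ k, Q t k ^ 2 ≠ 0) (hQ : ∀ t, HasDerivAt Q (V t) t)
    (hV : ∀ t, HasDerivAt V ((2 * keplerEnergy g (Q t) (V t)) • Q t) t) (t s : ℝ) :
    keplerEnergy g (Q t) (V t) = keplerEnergy g (Q s) (V s) :=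
  have hE t := hasDerivAt_keplerEnergy_eq_zero (hQ0 t) (hQ t) (hV t)
  is_const_of_deriv_eq_zero (fun t => (hE t).differentiableAt) (fun t => (hE t).deriv) t s

theorem stmt_16_general (g : ℝ) (Q V : ℝ → (Fin 4 → ℝ))
    (hQ0 : ∀ t, (∑ k, Q t k ^ 2) ≠ 0)
    (hQ : ∀ t, HasDerivAt Q (V t) t)
    (hV : ∀ t, HasDerivAt V ((2 * keplerEnergy g (Q t) (V t)) • Q t) t) :
    (∀ t s : ℝ, keplerEnergy g (Q t) (V t) = keplerEnergy g (Q s) (V s)) ∧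
    (∀ t : ℝ, ∀ E₀ : ℝ, keplerEnergy g (Q t) (V t) = E₀ → E₀ < 0 →
      HasDerivAt V ((-(2 * |E₀|)) • Q t) t) := by
  refine ⟨keplerEnergy_const hQ0 hQ hV, fun t E₀ hEt hE₀ => ?_⟩
  rw [abs_of_neg hE₀, mul_neg, neg_neg, ← hEt]
  exact hV t

/-- Along the regularized Kepler field `Γ' = 𝒱ᵏ∂/∂Qᵏ + 2E(Q,𝒱) Qᵏ∂/∂𝒱ᵏ` on
`T(ℝ⁴∖{0})`, the energy `E` is a constant of motion, and on each level set with
`E = E₀ < 0` the field restricts to the harmonic oscillator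
`𝒱ᵏ∂/∂Qᵏ − 2|E₀| Qᵏ∂/∂𝒱ᵏ` of frequency `√(2|E₀|)`. -/
theorem stmt_16 (g : ℝ) (hg : 0 < g) (Q V : ℝ → (Fin 4 → ℝ))
    (hQ0 : ∀ t, (∑ k, Q t k ^ 2) ≠ 0)
    (hQ : ∀ t, HasDerivAt Q (V t) t)
    (hV : ∀ t, HasDerivAt V ((2 * keplerEnergy g (Q t) (V t)) • Q t) t) :
    (∀ t s : ℝ, keplerEnergy g (Q t) (V t) = keplerEnergy g (Q s) (V s)) ∧
    (∀ t : ℝ, ∀ E₀ : ℝ, keplerEnergy g (Q t) (V t) = E₀ → E₀ < 0 →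
      HasDerivAt V ((-(2 * |E₀|)) • Q t) t) :=
  stmt_16_general g Q V hQ0 hQ hV
end
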